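/- arXiv:2505.10680 — 2 statements merged into one kernel-verified Lean document; each statement's English description precedes it below -/
import Mathlib

section
/- Let D be a binary string of length n and let G be a 2D SLP of size s generating the 1×n 2D string whose single row is D (i.e., a one-dimensional SLP for D). Then there exists a 2D SLP of size at most 3s generating the n×n 2D string B_D over the alphabet {0,1}×{0,1} defined by B_D[i][j] = ⟨D[i], D[j]⟩. -/
/-!
Statement 8: Let `D` be a binary string of length `n` and let `G` be a 2D SLP of
size `s` generating the `1 × n` 2D string whose single row is `D`.  Then there
exists a 2D SLP of size at most `3s` generating the `n × n` 2D string `B_D` over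
the alphabet `{0,1} × {0,1}` defined by `B_D[i][j] = ⟨D[i], D[j]⟩`.
-/

/-- A rule of a 2D SLP: terminal, horizontal concatenation, or vertical concatenation. -/
inductive Rule2D (α : Type*) (V : ℕ) : Type _ where
  | term : α → Rule2D α V
  | horiz : Fin V → Fin V → Rule2D α V
  | vert : Fin V → Fin V → Rule2D α V

/-- Variables referenced by a rule. -/
def Rule2D.refs {α : Type*} {V : ℕ} : Rule2D α V → List (Fin V)
  | .term _ => []
  | .horiz B C => [B, C]
  | .vert B C => [B, C]

/-- Size of a rule: terminal rules count 1, concatenation rules count 2. -/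
def Rule2D.size {α : Type*} {V : ℕ} : Rule2D α V → ℕ
  | .term _ => 1
  | .horiz _ _ => 2
  | .vert _ _ => 2

/-- Consistency of the recorded expansions with a rule. -/
def ConsistentAt {α : Type*} {V : ℕ} (rows cols : Fin V → ℕ)
    (ent : Fin V → ℕ → ℕ → α) (A : Fin V) : Rule2D α V → Prop
  | .term a => rows A = 1 ∧ cols A = 1 ∧ ent A 0 0 = a
  | .horiz B C => rows A = rows B ∧ rows A = rows C ∧ cols A = cols B + cols C ∧
      (∀ i j, i < rows B → j < cols B → ent A i j = ent B i j) ∧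
      (∀ i j, i < rows C → j < cols C → ent A i (cols B + j) = ent C i j)
  | .vert B C => cols A = cols B ∧ cols A = cols C ∧ rows A = rows B + rows C ∧
      (∀ i j, i < rows B → j < cols B → ent A i j = ent B i j) ∧
      (∀ i j, i < rows C → j < cols C → ent A (rows B + i) j = ent C i j)

/-- A 2D straight-line program over the alphabet `α`. -/
structure SLP2D (α : Type*) where
  V : ℕ
  rule : Fin V → Rule2D α V
  start : Fin V
  rows : Fin V → ℕ
  cols : Fin V → ℕ
  ent : Fin V → ℕ → ℕ → α
  acyclic : ∀ A : Fin V, ∀ B ∈ (rule A).refs, B < A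
  consistent : ∀ A : Fin V, ConsistentAt rows cols ent A (rule A)

/-- The size of a 2D SLP: the sum of the sizes of its rules. -/
def SLP2D.size {α : Type*} (G : SLP2D α) : ℕ := ∑ A : Fin G.V, (G.rule A).size

/-- `G` generates the `m × n` 2D string `M` (0-based entries). -/
def SLP2D.Generates {α : Type*} (G : SLP2D α) (m n : ℕ) (M : ℕ → ℕ → α) : Prop :=
  G.rows G.start = m ∧ G.cols G.start = n ∧
  ∀ i j, i < m → j < n → G.ent G.start i j = M i j


/-!
Transposing an SLP for the row `D` and pairing each letter with a fixed bit `b` yields, at the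
same size, an SLP for the column `((D i, b))ᵢ`. Put two such copies side by side and substitute,
in `G` itself, every letter `b` by the `n × 1` column for `b`: the row `D` becomes the `n × n`
matrix whose `j`-th column is `((D i, D j))ᵢ`, which is `B_D`. The substituted rules cost `|G|`
on top of the `2|G|` of the two columns.
-/
namespace Rule2D

variable {α β : Type*} {V W : ℕ}

def map (g : α → β) (f : Fin V → Fin W) : Rule2D α V → Rule2D β W
  | term a => term (g a)
  | horiz B C => horiz (f B) (f C)
  | vert B C => vert (f B) (f C)

def transposeMap (g : α → β) : Rule2D α V → Rule2D β V
  | term a => term (g a)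
  | horiz B C => vert B C
  | vert B C => horiz B C

@[simp]
lemma refs_map (g : α → β) (f : Fin V → Fin W) (r : Rule2D α V) :
    (r.map g f).refs = r.refs.map f := by
  cases r <;> rfl

lemma lt_of_mem_refs_map {g : α → β} {f : Fin V → Fin W} {r : Rule2D α V} {A' : Fin W}
    (h : ∀ B ∈ r.refs, f B < A') : ∀ B' ∈ (r.map g f).refs, B' < A' := by
  simpa using h

@[simp]
lemma size_map (g : α → β) (f : Fin V → Fin W) (r : Rule2D α V) :
    (r.map g f).size = r.size := by
  cases r <;> rfl

@[simp]
lemma refs_transposeMap (g : α → β) (r : Rule2D α V) : (r.transposeMap g).refs = r.refs := by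
  cases r <;> rfl

@[simp]
lemma size_transposeMap (g : α → β) (r : Rule2D α V) : (r.transposeMap g).size = r.size := by
  cases r <;> rfl

end Rule2D

/-- `e'` is `e` with every letter `a` replaced by the `p × q` tile `tile a`. -/
def IsBlowup {α β : Type*} (p q : ℕ) (tile : α → ℕ → ℕ → β) (r c : ℕ) (e : ℕ → ℕ → α)
    (r' c' : ℕ) (e' : ℕ → ℕ → β) : Prop :=
  r' = p * r ∧ c' = q * c ∧
    ∀ i j, i < p * r → j < q * c → e' i j = tile (e (i / p) (j / q)) (i % p) (j % q)

lemma IsBlowup.transpose {α β : Type*} {p q : ℕ} {tile : α → ℕ → ℕ → β} {r c : ℕ}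
    {e : ℕ → ℕ → α} {r' c' : ℕ} {e' : ℕ → ℕ → β} (h : IsBlowup p q tile r c e r' c' e') :
    IsBlowup q p (fun a i j => tile a j i) c r (fun i j => e j i) c' r' (fun i j => e' j i) :=
  ⟨h.2.1, h.1, fun i j hi hj => h.2.2 j i hj hi⟩

namespace ConsistentAt

variable {α β : Type*} {V W : ℕ} {rows cols : Fin V → ℕ} {ent : Fin V → ℕ → ℕ → α}
  {rows' cols' : Fin W → ℕ} {ent' : Fin W → ℕ → ℕ → β} {A : Fin V} {r : Rule2D α V}

lemma map {g : α → β} {f : Fin V → Fin W} (hrows : ∀ B, rows' (f B) = rows B)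
    (hcols : ∀ B, cols' (f B) = cols B) (hent : ∀ B i j, ent' (f B) i j = g (ent B i j))
    (h : ConsistentAt rows cols ent A r) : ConsistentAt rows' cols' ent' (f A) (r.map g f) := by
  cases r <;> simp only [ConsistentAt, Rule2D.map, hrows, hcols, hent] at h ⊢ <;> grind

lemma transposeMap (g : α → β) (h : ConsistentAt rows cols ent A r) :
    ConsistentAt cols rows (fun B i j => g (ent B j i)) A (r.transposeMap g) := by
  cases r <;> simp only [ConsistentAt, Rule2D.transposeMap] at h ⊢ <;> grind

variable {p q : ℕ} {tile : α → ℕ → ℕ → β} {B C : Fin V} {A' B' C' : Fin W}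

lemma horiz_of_isBlowup (h : ConsistentAt rows cols ent A (.horiz B C))
    (hA : IsBlowup p q tile (rows A) (cols A) (ent A) (rows' A') (cols' A') (ent' A'))
    (hB : IsBlowup p q tile (rows B) (cols B) (ent B) (rows' B') (cols' B') (ent' B'))
    (hC : IsBlowup p q tile (rows C) (cols C) (ent C) (rows' C') (cols' C') (ent' C')) :
    ConsistentAt rows' cols' ent' A' (.horiz B' C') := by
  obtain ⟨hrowsB, hrowsC, hcolsA, hentB, hentC⟩ := h
  obtain ⟨hrA, hcA, heA⟩ := hA
  obtain ⟨hrB, hcB, heB⟩ := hB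
  obtain ⟨hrC, hcC, heC⟩ := hC
  refine ⟨by rw [hrA, hrB, hrowsB], by rw [hrA, hrC, hrowsC],
    by rw [hcA, hcB, hcC, hcolsA, mul_add], ?_, ?_⟩
  · intro i j hi hj
    rw [hrB] at hi
    rw [hcB] at hj
    rw [heA i j (by rwa [hrowsB]) (by rw [hcolsA, mul_add]; omega), heB i j hi hj,
      hentB _ _ (Nat.div_lt_of_lt_mul hi) (Nat.div_lt_of_lt_mul hj)]
  · intro i j hi hj
    rw [hrC] at hi
    rw [hcC] at hj
    have hq : 0 < q := Nat.pos_of_mul_pos_right (Nat.zero_lt_of_lt hj)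
    rw [hcB, heA i _ (by rwa [hrowsC]) (by rw [hcolsA, mul_add]; omega), heC i j hi hj,
      Nat.mul_add_div hq, Nat.mul_add_mod,
      hentC _ _ (Nat.div_lt_of_lt_mul hi) (Nat.div_lt_of_lt_mul hj)]

lemma vert_of_isBlowup (h : ConsistentAt rows cols ent A (.vert B C))
    (hA : IsBlowup p q tile (rows A) (cols A) (ent A) (rows' A') (cols' A') (ent' A'))
    (hB : IsBlowup p q tile (rows B) (cols B) (ent B) (rows' B') (cols' B') (ent' B'))
    (hC : IsBlowup p q tile (rows C) (cols C) (ent C) (rows' C') (cols' C') (ent' C')) :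
    ConsistentAt rows' cols' ent' A' (.vert B' C') :=
  (horiz_of_isBlowup (h.transposeMap id) hA.transpose hB.transpose hC.transpose).transposeMap id

end ConsistentAt

namespace SLP2D

variable {α β : Type*}

lemma consistentAt_term (G : SLP2D α) {A : Fin G.V} {a : α} (h : G.rule A = .term a) :
    G.rows A = 1 ∧ G.cols A = 1 ∧ G.ent A 0 0 = a := by
  simpa [h, ConsistentAt] using G.consistent A

def transposeMap (g : α → β) (G : SLP2D α) : SLP2D β where
  V := G.V
  rule A := (G.rule A).transposeMap g
  start := G.start
  rows := G.cols
  cols := G.rows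
  ent A i j := g (G.ent A j i)
  acyclic A := by simpa using G.acyclic A
  consistent A := (G.consistent A).transposeMap g

@[simp]
lemma size_transposeMap (g : α → β) (G : SLP2D α) : (G.transposeMap g).size = G.size :=
  Finset.sum_congr rfl fun A _ => Rule2D.size_transposeMap g (G.rule A)

def append (G₁ G₂ : SLP2D α) : SLP2D α where
  V := G₁.V + G₂.V
  rule := Fin.addCases (fun A => (G₁.rule A).map id (Fin.castAdd G₂.V))
    (fun A => (G₂.rule A).map id (Fin.natAdd G₁.V))
  start := Fin.natAdd G₁.V G₂.start
  rows := Fin.addCases G₁.rows G₂.rows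
  cols := Fin.addCases G₁.cols G₂.cols
  ent := Fin.addCases G₁.ent G₂.ent
  acyclic A := by
    induction A using Fin.addCases with
    | left A =>
      rw [Fin.addCases_left]
      exact Rule2D.lt_of_mem_refs_map fun B hB =>
        Fin.lt_def.mpr (G₁.acyclic A B hB)
    | right A =>
      rw [Fin.addCases_right]
      exact Rule2D.lt_of_mem_refs_map fun B hB =>
        (Fin.natAdd_lt_natAdd_iff _).mpr (G₂.acyclic A B hB)
  consistent A := by
    induction A using Fin.addCases with
    | left A => simpa using (G₁.consistent A).map (g := id) (by simp) (by simp) (by simp)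
    | right A => simpa using (G₂.consistent A).map (g := id) (by simp) (by simp) (by simp)

@[simp]
lemma size_append (G₁ G₂ : SLP2D α) : (G₁.append G₂).size = G₁.size + G₂.size :=
  (Fin.sum_univ_add _).trans (by simp [append, SLP2D.size])

section Subst

variable {α β : Type*} (H : SLP2D β) (σ : α → Fin H.V) (p q : ℕ) (G : SLP2D α)

def substVar (B : Fin G.V) : Fin (H.V + G.V) :=
  match G.rule B with
  | .term a => Fin.castAdd G.V (σ a)
  | _ => Fin.natAdd H.V B

/-- The copy of a terminal variable of `G` is never referenced, since `substVar` sends it to its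
tile, so it is left as a dead `1 × 1` terminal. -/
def substRule : Fin (H.V + G.V) → Rule2D β (H.V + G.V) :=
  Fin.addCases (fun A => (H.rule A).map id (Fin.castAdd G.V))
    (fun A => (G.rule A).map (fun a => H.ent (σ a) 0 0) (substVar H σ G))

def substRows : Fin (H.V + G.V) → ℕ :=
  Fin.addCases H.rows fun A =>
    match G.rule A with
    | .term _ => 1
    | _ => p * G.rows A

def substCols : Fin (H.V + G.V) → ℕ :=
  Fin.addCases H.cols fun A =>
    match G.rule A with
    | .term _ => 1
    | _ => q * G.cols A

def substEnt : Fin (H.V + G.V) → ℕ → ℕ → β :=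
  Fin.addCases H.ent fun A i j => H.ent (σ (G.ent A (i / p) (j / q))) (i % p) (j % q)

variable {H σ p q G}

lemma substVar_lt_natAdd {A B : Fin G.V} (h : B < A) : substVar H σ G B < Fin.natAdd H.V A := by
  rw [Fin.lt_def] at h ⊢
  cases hB : G.rule B <;> simp [substVar, hB] <;> omega

lemma substRule_acyclic (A : Fin (H.V + G.V)) : ∀ B ∈ (substRule H σ G A).refs, B < A := by
  induction A using Fin.addCases with
  | left A =>
    rw [substRule, Fin.addCases_left]
    exact Rule2D.lt_of_mem_refs_map fun B hB => Fin.lt_def.mpr (H.acyclic A B hB)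
  | right A =>
    rw [substRule, Fin.addCases_right]
    exact Rule2D.lt_of_mem_refs_map fun B hB => substVar_lt_natAdd (G.acyclic A B hB)

variable (hσ : ∀ a, H.rows (σ a) = p ∧ H.cols (σ a) = q)
include hσ

lemma isBlowup_substVar (B : Fin G.V) :
    IsBlowup p q (fun a => H.ent (σ a)) (G.rows B) (G.cols B) (G.ent B)
      (substRows H p G (substVar H σ G B)) (substCols H q G (substVar H σ G B))
      (substEnt H σ p q G (substVar H σ G B)) := by
  cases hB : G.rule B with
  | term a =>
    obtain ⟨hr, hc, he⟩ := G.consistentAt_term hB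
    refine ⟨by simp [substVar, substRows, hB, hr, hσ], by simp [substVar, substCols, hB, hc, hσ],
      fun i j hi hj => ?_⟩
    rw [hr, mul_one] at hi
    rw [hc, mul_one] at hj
    simp [substVar, substEnt, hB, Nat.div_eq_of_lt hi, Nat.div_eq_of_lt hj, Nat.mod_eq_of_lt hi,
      Nat.mod_eq_of_lt hj, he]
  | horiz => exact ⟨by simp [substVar, substRows, hB], by simp [substVar, substCols, hB],
      fun i j _ _ => by simp [substVar, substEnt, hB]⟩
  | vert => exact ⟨by simp [substVar, substRows, hB], by simp [substVar, substCols, hB],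
      fun i j _ _ => by simp [substVar, substEnt, hB]⟩

lemma consistentAt_subst (A : Fin (H.V + G.V)) :
    ConsistentAt (substRows H p G) (substCols H q G) (substEnt H σ p q G) A
      (substRule H σ G A) := by
  induction A using Fin.addCases with
  | left A =>
    rw [substRule, Fin.addCases_left]
    exact (H.consistent A).map (g := id) (by simp [substRows]) (by simp [substCols])
      (by simp [substEnt])
  | right A =>
    rw [substRule, Fin.addCases_right]
    have hA := isBlowup_substVar hσ A
    cases hr : G.rule A with
    | term a =>
      obtain ⟨-, -, he⟩ := G.consistentAt_term hr
      simp [ConsistentAt, Rule2D.map, substRows, substCols, substEnt, hr, he]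
    | horiz B C =>
      simp only [substVar, hr] at hA
      exact (hr ▸ G.consistent A).horiz_of_isBlowup hA (isBlowup_substVar hσ B)
        (isBlowup_substVar hσ C)
    | vert B C =>
      simp only [substVar, hr] at hA
      exact (hr ▸ G.consistent A).vert_of_isBlowup hA (isBlowup_substVar hσ B)
        (isBlowup_substVar hσ C)

variable (H σ p q G) in
def subst : SLP2D β where
  V := H.V + G.V
  rule := substRule H σ G
  start := substVar H σ G G.start
  rows := substRows H p G
  cols := substCols H q G
  ent := substEnt H σ p q G
  acyclic := substRule_acyclic
  consistent := consistentAt_subst hσ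

@[simp]
lemma size_subst : (H.subst σ p q G hσ).size = H.size + G.size := by
  refine (Fin.sum_univ_add _).trans ?_
  simp [subst, substRule, SLP2D.size]

lemma Generates.subst {m k : ℕ} {M : ℕ → ℕ → α} (hG : G.Generates m k M) :
    (H.subst σ p q G hσ).Generates (p * m) (q * k)
      (fun i j => H.ent (σ (M (i / p) (j / q))) (i % p) (j % q)) := by
  obtain ⟨hrows, hcols, hent⟩ := hG
  obtain ⟨hr, hc, he⟩ := isBlowup_substVar hσ G.start
  rw [hrows] at hr he
  rw [hcols] at hc he
  refine ⟨hr, hc, fun i j hi hj => (he i j hi hj).trans ?_⟩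
  rw [hent _ _ (Nat.div_lt_of_lt_mul hi) (Nat.div_lt_of_lt_mul hj)]

end Subst

end SLP2D

theorem statement8 (n : ℕ) (D : ℕ → Bool) (G : SLP2D Bool)
    (hG : G.Generates 1 n (fun _ j => D j)) :
    ∃ G' : SLP2D (Bool × Bool),
      G'.Generates n n (fun i j => (D i, D j)) ∧ G'.size ≤ 3 * G.size := by
  obtain ⟨hrows, hcols, hent⟩ := hG
  let H := (G.transposeMap (·, false)).append (G.transposeMap (·, true))
  let σ : Bool → Fin H.V := fun b =>
    bif b then Fin.natAdd G.V G.start else Fin.castAdd G.V G.start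
  have hσ : ∀ b, H.rows (σ b) = n ∧ H.cols (σ b) = 1 := by
    intro b
    cases b <;> simp only [H, σ, SLP2D.append, SLP2D.transposeMap, cond_true, cond_false,
      Fin.addCases_left, Fin.addCases_right, hrows, hcols, and_self]
  have htile : ∀ b i, i < n → H.ent (σ b) i 0 = (D i, b) := by
    intro b i hi
    cases b <;> simp only [H, σ, SLP2D.append, SLP2D.transposeMap, cond_true, cond_false,
      Fin.addCases_left, Fin.addCases_right, hent 0 i one_pos hi]
  refine ⟨H.subst σ n 1 G hσ, ?_, by simp [H]; omega⟩
  obtain ⟨hr, hc, he⟩ := SLP2D.Generates.subst hσ ⟨hrows, hcols, hent⟩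
  refine ⟨by simpa using hr, by simpa using hc, fun i j hi hj => ?_⟩
  rw [he i j (by simpa using hi) (by simpa using hj)]
  simp only [Nat.div_one, Nat.mod_one, Nat.mod_eq_of_lt hi]
  exact htile _ _ hi
end

section
/- For every k ≥ 1, there exists a 2D SLP of size at most 10k generating E_k; hence g(E_k) = O(k). Combined with δ(E_k) ≥ 2^k/k, this yields an infinite family of 2D strings of size N = k·2^k with δ = Ω(g·N/log³N). -/
/-- The 2D string `E_k` (independent of `k` as a total function):
`E i j` is the `i`-th binary digit of `j`. -/
def Emat : ℕ → ℕ → Bool := fun i j => Nat.testBit j i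

namespace S12

def decT (n : ℕ) : ℕ := (n - 3) / 5 + 1
def decR (n : ℕ) : ℕ := (n - 3) % 5

def zIdx (s : ℕ) : ℕ := if s = 0 then 0 else 5 * s - 2
def oIdx (s : ℕ) : ℕ := if s = 0 then 1 else 5 * s - 1
def eIdx (t : ℕ) : ℕ := 5 * t - 3

def rowsNat (n : ℕ) : ℕ :=
  if n ≤ 2 then 1
  else if decR n = 3 then decT n
  else if decR n = 4 then decT n + 1
  else 1

def colsNat (n : ℕ) : ℕ :=
  if n ≤ 1 then 1 else if n = 2 then 2
  else if decR n ≤ 1 then 2 ^ decT n else 2 ^ (decT n + 1)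

def entNat (n i j : ℕ) : Bool :=
  if n = 0 then false else if n = 1 then true else if n = 2 then j.testBit i
  else if decR n = 0 then false else if decR n = 1 then true
  else if decR n = 2 then j.testBit (decT n)
  else j.testBit i

lemma zIdx_pos (s : ℕ) (h : 1 ≤ s) : zIdx s = 5 * s - 2 := by
  unfold zIdx; rw [if_neg (by omega)]

lemma oIdx_pos (s : ℕ) (h : 1 ≤ s) : oIdx s = 5 * s - 1 := by
  unfold oIdx; rw [if_neg (by omega)]

lemma rows_z (s : ℕ) : rowsNat (zIdx s) = 1 := by
  rcases Nat.eq_zero_or_pos s with h | h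
  · subst h; rfl
  · rw [zIdx_pos s h]; unfold rowsNat decR decT
    rw [if_neg (by omega)]; rw [if_neg (by omega)]; rw [if_neg (by omega)]

lemma cols_z (s : ℕ) : colsNat (zIdx s) = 2 ^ s := by
  rcases Nat.eq_zero_or_pos s with h | h
  · subst h; rfl
  · rw [zIdx_pos s h]; unfold colsNat decR decT
    rw [if_neg (by omega), if_neg (by omega), if_pos (by omega)]
    congr 1; omega

lemma ent_z (s i j : ℕ) : entNat (zIdx s) i j = false := by
  rcases Nat.eq_zero_or_pos s with h | h
  · subst h; rfl
  · rw [zIdx_pos s h]; unfold entNat decR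
    rw [if_neg (by omega), if_neg (by omega), if_neg (by omega), if_pos (by omega)]

lemma rows_o (s : ℕ) : rowsNat (oIdx s) = 1 := by
  rcases Nat.eq_zero_or_pos s with h | h
  · subst h; rfl
  · rw [oIdx_pos s h]; unfold rowsNat decR decT
    rw [if_neg (by omega)]; rw [if_neg (by omega)]; rw [if_neg (by omega)]

lemma cols_o (s : ℕ) : colsNat (oIdx s) = 2 ^ s := by
  rcases Nat.eq_zero_or_pos s with h | h
  · subst h; rfl
  · rw [oIdx_pos s h]; unfold colsNat decR decT
    rw [if_neg (by omega), if_neg (by omega), if_pos (by omega)]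
    congr 1; omega

lemma ent_o (s i j : ℕ) : entNat (oIdx s) i j = true := by
  rcases Nat.eq_zero_or_pos s with h | h
  · subst h; rfl
  · rw [oIdx_pos s h]; unfold entNat decR
    rw [if_neg (by omega), if_neg (by omega), if_neg (by omega),
      if_neg (by omega), if_pos (by omega)]

lemma rows_e (t : ℕ) (ht : 1 ≤ t) : rowsNat (eIdx t) = t := by
  rcases Nat.lt_or_ge t 2 with h | h
  · interval_cases t; rfl
  · unfold eIdx rowsNat decR decT
    rw [if_neg (by omega), if_neg (by omega), if_pos (by omega)]
    omega

lemma cols_e (t : ℕ) (ht : 1 ≤ t) : colsNat (eIdx t) = 2 ^ t := by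
  rcases Nat.lt_or_ge t 2 with h | h
  · interval_cases t; rfl
  · unfold eIdx colsNat decR decT
    rw [if_neg (by omega), if_neg (by omega), if_neg (by omega)]
    congr 1; omega

lemma ent_e (t i j : ℕ) (ht : 1 ≤ t) : entNat (eIdx t) i j = j.testBit i := by
  rcases Nat.lt_or_ge t 2 with h | h
  · interval_cases t; rfl
  · unfold eIdx entNat decR
    rw [if_neg (by omega), if_neg (by omega), if_neg (by omega),
      if_neg (by omega), if_neg (by omega), if_neg (by omega)]

-- the "T" variable (top part) at index 5t+1 and "B" (bottom row) at index 5t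
lemma rows_T (t : ℕ) (ht : 1 ≤ t) : rowsNat (5 * t + 1) = t := by
  unfold rowsNat decR decT
  rw [if_neg (by omega), if_pos (by omega)]; omega

lemma cols_T (t : ℕ) (ht : 1 ≤ t) : colsNat (5 * t + 1) = 2 ^ (t + 1) := by
  unfold colsNat decR decT
  rw [if_neg (by omega), if_neg (by omega), if_neg (by omega)]
  congr 1; omega

lemma ent_T (t i j : ℕ) (ht : 1 ≤ t) : entNat (5 * t + 1) i j = j.testBit i := by
  unfold entNat decR
  rw [if_neg (by omega), if_neg (by omega), if_neg (by omega),
    if_neg (by omega), if_neg (by omega), if_neg (by omega)]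

lemma rows_B (t : ℕ) (ht : 1 ≤ t) : rowsNat (5 * t) = 1 := by
  unfold rowsNat decR decT
  rw [if_neg (by omega), if_neg (by omega), if_neg (by omega)]

lemma cols_B (t : ℕ) (ht : 1 ≤ t) : colsNat (5 * t) = 2 ^ (t + 1) := by
  unfold colsNat decR decT
  rw [if_neg (by omega), if_neg (by omega), if_neg (by omega)]
  congr 1; omega

lemma ent_B (t i j : ℕ) (ht : 1 ≤ t) : entNat (5 * t) i j = j.testBit t := by
  unfold entNat decR
  rw [if_neg (by omega), if_neg (by omega), if_neg (by omega),
    if_neg (by omega), if_neg (by omega), if_pos (by omega)]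
  congr 1; unfold decT; omega

lemma pow_pred (t : ℕ) (h : 1 ≤ t) : (2 : ℕ) ^ t = 2 ^ (t - 1) + 2 ^ (t - 1) := by
  obtain ⟨s, rfl⟩ : ∃ s, t = s + 1 := ⟨t - 1, by omega⟩
  simp [pow_succ]; ring

/-- (tag, b, c): tag 0 = term false, 1 = term true, 2 = horiz, otherwise vert -/
def decodeRule (n : ℕ) : ℕ × ℕ × ℕ :=
  if n = 0 then (0, 0, 0) else if n = 1 then (1, 0, 0) else if n = 2 then (2, 0, 1)
  else if decR n = 0 then (2, zIdx (decT n - 1), zIdx (decT n - 1))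
  else if decR n = 1 then (2, oIdx (decT n - 1), oIdx (decT n - 1))
  else if decR n = 2 then (2, zIdx (decT n), oIdx (decT n))
  else if decR n = 3 then (2, eIdx (decT n), eIdx (decT n))
  else (3, 5 * decT n + 1, 5 * decT n)

def mkRule (V : ℕ) (h : 0 < V) (p : ℕ × ℕ × ℕ) : Rule2D Bool V :=
  match p with
  | (0, _, _) => .term false
  | (1, _, _) => .term true
  | (2, b, c) => .horiz ⟨b % V, Nat.mod_lt _ h⟩ ⟨c % V, Nat.mod_lt _ h⟩
  | (_ + 3, b, c) => .vert ⟨b % V, Nat.mod_lt _ h⟩ ⟨c % V, Nat.mod_lt _ h⟩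

lemma size_le_two {α : Type*} {V : ℕ} (r : Rule2D α V) : r.size ≤ 2 := by
  cases r
  · exact Nat.le_succ 1
  · exact Nat.le_refl 2
  · exact Nat.le_refl 2

lemma mkRule_refs {V : ℕ} (h : 0 < V) (p : ℕ × ℕ × ℕ) :
    ∀ B ∈ (mkRule V h p).refs, (B : ℕ) = p.2.1 % V ∨ (B : ℕ) = p.2.2 % V := by
  obtain ⟨tag, b, c⟩ := p
  match tag with
  | 0 => intro B hB; simp [mkRule, Rule2D.refs] at hB
  | 1 => intro B hB; simp [mkRule, Rule2D.refs] at hB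
  | 2 =>
      intro B hB
      simp only [mkRule, Rule2D.refs, List.mem_cons, List.not_mem_nil, or_false] at hB
      rcases hB with rfl | rfl <;> simp
  | m + 3 =>
      intro B hB
      simp only [mkRule, Rule2D.refs, List.mem_cons, List.not_mem_nil, or_false] at hB
      rcases hB with rfl | rfl <;> simp

lemma decode_comp_lt (n : ℕ) (h2 : 2 ≤ n) :
    (decodeRule n).2.1 < n ∧ (decodeRule n).2.2 < n := by
  unfold decodeRule
  split_ifs with h0 h1 hn2 hr0 hr1 hr2 hr3
  · omega
  · omega
  · exact ⟨show 0 < n by omega, show 1 < n by omega⟩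
  · show zIdx (decT n - 1) < n ∧ zIdx (decT n - 1) < n
    unfold zIdx decT; unfold decR at hr0; split_ifs <;> omega
  · show oIdx (decT n - 1) < n ∧ oIdx (decT n - 1) < n
    unfold oIdx decT; unfold decR at hr1; split_ifs <;> omega
  · show zIdx (decT n) < n ∧ oIdx (decT n) < n
    unfold zIdx oIdx decT; unfold decR at hr2; split_ifs <;> omega
  · show eIdx (decT n) < n ∧ eIdx (decT n) < n
    unfold eIdx decT; unfold decR at hr3; omega
  · show 5 * decT n + 1 < n ∧ 5 * decT n < n
    unfold decT; unfold decR at hr0 hr1 hr2 hr3; omega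

end S12

open S12

theorem statement12 (k : ℕ) (hk : 1 ≤ k) :
    ∃ G : SLP2D Bool, G.Generates k (2 ^ k) Emat ∧ G.size ≤ 10 * k := by
  have hV : 0 < 5 * k - 2 := by omega
  refine ⟨{ V := 5 * k - 2
            rule := fun A => mkRule (5 * k - 2) hV (decodeRule A.val)
            start := ⟨5 * k - 3, by omega⟩
            rows := fun A => rowsNat A.val
            cols := fun A => colsNat A.val
            ent := fun A => entNat A.val
            acyclic := ?_
            consistent := ?_ }, ?_, ?_⟩
  · -- acyclic
    rintro ⟨n, hn⟩ B hB
    by_cases h01 : n ≤ 1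
    · exfalso
      interval_cases n <;> simp [mkRule, decodeRule, Rule2D.refs] at hB
    · have hcomp := decode_comp_lt n (by omega)
      have hv := mkRule_refs hV (decodeRule n) B hB
      have hBlt : (B : ℕ) < n := by
        rcases hv with h | h
        · rw [h]; exact lt_of_le_of_lt (Nat.mod_le _ _) hcomp.1
        · rw [h]; exact lt_of_le_of_lt (Nat.mod_le _ _) hcomp.2
      exact hBlt
  · -- consistency
    rintro ⟨n, hn⟩
    show ConsistentAt _ _ _ _ (mkRule (5 * k - 2) hV (decodeRule n))
    unfold decodeRule
    split_ifs with h0 h1 h2 hr0 hr1 hr2 hr3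
    · -- term false
      subst h0; exact ⟨rfl, rfl, rfl⟩
    · subst h1; exact ⟨rfl, rfl, rfl⟩
    · -- n = 2 : E_1 = horiz 0 1
      subst h2
      have e0 : (0 : ℕ) % (5 * k - 2) = 0 := Nat.zero_mod _
      have e1 : (1 : ℕ) % (5 * k - 2) = 1 := Nat.mod_eq_of_lt (by omega)
      refine ⟨?_, ?_, ?_, ?_, ?_⟩ <;> simp only [mkRule, e0, e1]
      · rfl
      · rfl
      · rfl
      · intro i j hi hj
        have : i = 0 := by simpa [rowsNat] using hi
        have : j = 0 := by simpa [colsNat] using hj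
        subst_vars; rfl
      · intro i j hi hj
        have : i = 0 := by simpa [rowsNat] using hi
        have : j = 0 := by simpa [colsNat] using hj
        subst_vars; rfl
    · -- Z_t = horiz Z_{t-1} Z_{t-1}
      set t := decT n with htdef
      have ht : 1 ≤ t := by unfold decT at htdef; omega
      have hnz : n = zIdx t := by
        rw [zIdx_pos t ht]; unfold decT at htdef; unfold decR at hr0; omega
      have hn5 : n = 5 * t - 2 := by rw [hnz, zIdx_pos t ht]
      have hzb : zIdx (t - 1) < 5 * k - 2 := by
        unfold zIdx; split_ifs <;> omega
      have hm : zIdx (t - 1) % (5 * k - 2) = zIdx (t - 1) := Nat.mod_eq_of_lt hzb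
      refine ⟨?_, ?_, ?_, ?_, ?_⟩ <;> simp only [mkRule, hm]
      · show rowsNat n = rowsNat (zIdx (t - 1)); rw [hnz, rows_z, rows_z]
      · show rowsNat n = rowsNat (zIdx (t - 1)); rw [hnz, rows_z, rows_z]
      · show colsNat n = colsNat (zIdx (t - 1)) + colsNat (zIdx (t - 1))
        rw [hnz, cols_z, cols_z]
        exact pow_pred t ht
      · intro i j _ _
        show entNat n i j = entNat (zIdx (t - 1)) i j
        rw [hnz, ent_z, ent_z]
      · intro i j _ _
        show entNat n i (colsNat (zIdx (t - 1)) + j) = entNat (zIdx (t - 1)) i j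
        rw [hnz, ent_z, ent_z]
    · -- O_t = horiz O_{t-1} O_{t-1}
      set t := decT n with htdef
      have ht : 1 ≤ t := by unfold decT at htdef; omega
      have hno : n = oIdx t := by
        rw [oIdx_pos t ht]; unfold decT at htdef; unfold decR at hr1; omega
      have hn5 : n = 5 * t - 1 := by rw [hno, oIdx_pos t ht]
      have hob : oIdx (t - 1) < 5 * k - 2 := by
        unfold oIdx; split_ifs <;> omega
      have hm : oIdx (t - 1) % (5 * k - 2) = oIdx (t - 1) := Nat.mod_eq_of_lt hob
      refine ⟨?_, ?_, ?_, ?_, ?_⟩ <;> simp only [mkRule, hm]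
      · show rowsNat n = rowsNat (oIdx (t - 1)); rw [hno, rows_o, rows_o]
      · show rowsNat n = rowsNat (oIdx (t - 1)); rw [hno, rows_o, rows_o]
      · show colsNat n = colsNat (oIdx (t - 1)) + colsNat (oIdx (t - 1))
        rw [hno, cols_o, cols_o]
        exact pow_pred t ht
      · intro i j _ _
        show entNat n i j = entNat (oIdx (t - 1)) i j
        rw [hno, ent_o, ent_o]
      · intro i j _ _
        show entNat n i (colsNat (oIdx (t - 1)) + j) = entNat (oIdx (t - 1)) i j
        rw [hno, ent_o, ent_o]
    · -- B_t = horiz Z_t O_t  (n = 5t)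
      set t := decT n with htdef
      have ht : 1 ≤ t := by unfold decT at htdef; omega
      have hnb : n = 5 * t := by
        unfold decT at htdef; unfold decR at hr2; omega
      have hzb : zIdx t < 5 * k - 2 := by unfold zIdx; split_ifs <;> omega
      have hob : oIdx t < 5 * k - 2 := by unfold oIdx; split_ifs <;> omega
      have hmz : zIdx t % (5 * k - 2) = zIdx t := Nat.mod_eq_of_lt hzb
      have hmo : oIdx t % (5 * k - 2) = oIdx t := Nat.mod_eq_of_lt hob
      refine ⟨?_, ?_, ?_, ?_, ?_⟩ <;> simp only [mkRule, hmz, hmo]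
      · show rowsNat n = rowsNat (zIdx t); rw [hnb, rows_B t ht, rows_z]
      · show rowsNat n = rowsNat (oIdx t); rw [hnb, rows_B t ht, rows_o]
      · show colsNat n = colsNat (zIdx t) + colsNat (oIdx t)
        rw [hnb, cols_B t ht, cols_z, cols_o, pow_succ]; ring
      · intro i j _ hj
        show entNat n i j = entNat (zIdx t) i j
        rw [hnb, ent_B t i j ht, ent_z]
        rw [cols_z] at hj
        exact Nat.testBit_lt_two_pow hj
      · intro i j _ hj
        show entNat n i (colsNat (zIdx t) + j) = entNat (oIdx t) i j
        rw [cols_o] at hj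
        rw [hnb, cols_z, ent_B _ _ _ ht, ent_o,
          Nat.testBit_two_pow_add_eq, Nat.testBit_lt_two_pow hj]
        rfl
    · -- T_t = horiz E_t E_t  (n = 5t+1)
      set t := decT n with htdef
      have ht : 1 ≤ t := by unfold decT at htdef; omega
      have hnt : n = 5 * t + 1 := by
        unfold decT at htdef; unfold decR at hr3; omega
      have heb : eIdx t < 5 * k - 2 := by unfold eIdx; omega
      have hme : eIdx t % (5 * k - 2) = eIdx t := Nat.mod_eq_of_lt heb
      refine ⟨?_, ?_, ?_, ?_, ?_⟩ <;> simp only [mkRule, hme]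
      · show rowsNat n = rowsNat (eIdx t); rw [hnt, rows_T t ht, rows_e t ht]
      · show rowsNat n = rowsNat (eIdx t); rw [hnt, rows_T t ht, rows_e t ht]
      · show colsNat n = colsNat (eIdx t) + colsNat (eIdx t)
        rw [hnt, cols_T t ht, cols_e t ht, pow_succ]; ring
      · intro i j _ _
        show entNat n i j = entNat (eIdx t) i j
        rw [hnt, ent_T t i j ht, ent_e t i j ht]
      · intro i j hi hj
        show entNat n i (colsNat (eIdx t) + j) = entNat (eIdx t) i j
        rw [rows_e t ht] at hi
        rw [hnt, ent_T _ _ _ ht, ent_e _ _ _ ht, cols_e t ht]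
        exact Nat.testBit_two_pow_add_gt hi j
    · -- E_{t+1} = vert T_t B_t  (n = 5t+2)
      set t := decT n with htdef
      have ht : 1 ≤ t := by unfold decT at htdef; omega
      have hr4 : decR n = 4 := by unfold decR at *; omega
      have hne : n = 5 * t + 2 := by
        unfold decT at htdef; unfold decR at hr4; omega
      have hne' : n = eIdx (t + 1) := by unfold eIdx; omega
      have hTb : 5 * t + 1 < 5 * k - 2 := by omega
      have hBb : 5 * t < 5 * k - 2 := by omega
      have hmT : (5 * t + 1) % (5 * k - 2) = 5 * t + 1 := Nat.mod_eq_of_lt hTb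
      have hmB : (5 * t) % (5 * k - 2) = 5 * t := Nat.mod_eq_of_lt hBb
      refine ⟨?_, ?_, ?_, ?_, ?_⟩ <;> simp only [mkRule, hmT, hmB]
      · show colsNat n = colsNat (5 * t + 1)
        rw [hne', cols_e _ (by omega), cols_T t ht]
      · show colsNat n = colsNat (5 * t)
        rw [hne', cols_e _ (by omega), cols_B t ht]
      · show rowsNat n = rowsNat (5 * t + 1) + rowsNat (5 * t)
        rw [hne', rows_e _ (by omega), rows_T t ht, rows_B t ht]
      · intro i j _ _
        show entNat n i j = entNat (5 * t + 1) i j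
        rw [hne', ent_e _ _ _ (by omega), ent_T _ _ _ ht]
      · intro i j hi _
        show entNat n (rowsNat (5 * t + 1) + i) j = entNat (5 * t) i j
        rw [rows_B t ht] at hi
        have : i = 0 := by omega
        subst this
        rw [hne', ent_e _ _ _ (by omega), ent_B _ _ _ ht, rows_T t ht]
        norm_num
  · -- Generates
    have hs : (5 * k - 3 : ℕ) = eIdx k := by unfold eIdx; omega
    refine ⟨?_, ?_, ?_⟩
    · show rowsNat (5 * k - 3) = k; rw [hs, rows_e k hk]
    · show colsNat (5 * k - 3) = 2 ^ k; rw [hs, cols_e k hk]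
    · intro i j _ _
      show entNat (5 * k - 3) i j = Emat i j
      rw [hs, ent_e _ _ _ hk]; rfl
  · -- size
    show (∑ A : Fin (5 * k - 2), (mkRule (5 * k - 2) hV (decodeRule A.val)).size) ≤ 10 * k
    refine le_trans (Finset.sum_le_sum fun A _ => size_le_two _) ?_
    simp only [Finset.sum_const, Finset.card_univ, Fintype.card_fin, smul_eq_mul]
    omega
end
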